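/- arXiv:1901.09722 — 2 statements merged into one kernel-verified Lean document; each statement's English description precedes it below -/
import Mathlib

section
/- Let F : T → c(M) with V⁺(F,T) < +∞, and let t ∈ T be a right limit point of T. Then v⁺(t+0) = v⁺(t) + limsup_{T ∋ s → t+0} e(F(t),F(s)), where v⁺(t) := V⁺(F, T∩(-∞,t]) and v⁺(t+0) is its right limit along T. -/
open Set Metric EMetric Filter
open scoped ENNReal Pointwise

noncomputable def exc {M : Type*} [MetricSpace M] (X Y : Set M) : ℝ≥0∞ :=
  ⨆ x ∈ X, EMetric.infEdist x Y

noncomputable def varBy {M : Type*} [MetricSpace M]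
    (D : Set M → Set M → ℝ≥0∞) (F : ℝ → Set M) (T : Set ℝ) : ℝ≥0∞ :=
  ⨆ p : {p : ℕ × (ℕ → ℝ) // Monotone p.2 ∧ ∀ i, p.2 i ∈ T},
    ∑ i ∈ Finset.range p.1.1, D (F (p.1.2 i)) (F (p.1.2 (i + 1)))

noncomputable def varPlus {M : Type*} [MetricSpace M] (F : ℝ → Set M) (T : Set ℝ) : ℝ≥0∞ :=
  varBy exc F T

noncomputable def varMinus {M : Type*} [MetricSpace M] (F : ℝ → Set M) (T : Set ℝ) : ℝ≥0∞ :=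
  varBy (fun X Y => exc Y X) F T

noncomputable def varH {M : Type*} [MetricSpace M] (F : ℝ → Set M) (T : Set ℝ) : ℝ≥0∞ :=
  varBy EMetric.hausdorffEdist F T

/-!
Write `v s = V⁺(F, T ∩ (-∞, s])`. Appending a point `s > t` to a partition of `T ∩ (-∞, t]`
gives `v t + e(F t, F s) ≤ v s`, hence the lower bound. Conversely, a partition of `T ∩ [t, u]`
repeats `t`, jumps once from `F t` to some `F s` with `s ∈ (t, u]`, and then stays in `(t, u]`, so
`v u ≤ v t + sup_{s ∈ (t, u]} e(F t, F s) + V⁺(F, T ∩ (t, u])`. The last term is at most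
`v u - v (t + 0)`, which is small for `u` close to `t` because `v (t + 0) ≤ V⁺(F, T) < ∞`.
-/

open scoped Topology

section Excess

variable {M : Type*} [MetricSpace M]

lemma exc_self (X : Set M) : exc X X = 0 :=
  le_antisymm (iSup₂_le fun _ hx => (infEDist_zero_of_mem hx).le) zero_le

lemma infEDist_le_infEDist_add_exc (x : M) (Y Z : Set M) :
    infEDist x Z ≤ infEDist x Y + exc Y Z := by
  refine tsub_le_iff_right.1 (le_infEDist.2 fun y hy => tsub_le_iff_right.2 ?_)
  exact infEDist_le_edist_add_infEDist.trans
    (add_le_add_right (le_iSup₂ (f := fun y (_ : y ∈ Y) => infEDist y Z) y hy) _)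

lemma exc_triangle (X Y Z : Set M) : exc X Z ≤ exc X Y + exc Y Z :=
  iSup₂_le fun x hx => (infEDist_le_infEDist_add_exc x Y Z).trans
    (add_le_add_left (le_iSup₂ (f := fun x (_ : x ∈ X) => infEDist x Y) x hx) _)

lemma exc_le_exc_min_add_exc_max (F : ℝ → Set M) {a b : ℝ} (hab : a ≤ b) (t : ℝ) :
    exc (F a) (F b) ≤ exc (F (min a t)) (F (min b t)) + exc (F (max a t)) (F (max b t)) := by
  rcases le_total t a with hta | hat
  · rw [min_eq_right hta, min_eq_right (hta.trans hab), exc_self, zero_add,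
      max_eq_left hta, max_eq_left (hta.trans hab)]
  rcases le_total b t with hbt | htb
  · rw [min_eq_left hat, min_eq_left hbt, max_eq_right hat, max_eq_right hbt, exc_self, add_zero]
  · rw [min_eq_left hat, min_eq_right htb, max_eq_right hat, max_eq_left htb]
    exact exc_triangle _ _ _

end Excess

section Variation

variable {M : Type*} [MetricSpace M] {F : ℝ → Set M} {S T : Set ℝ}

lemma nonempty_partition {a : ℝ} (ha : a ∈ S) :
    Nonempty {p : ℕ × (ℕ → ℝ) // Monotone p.2 ∧ ∀ i, p.2 i ∈ S} :=
  ⟨⟨(0, fun _ => a), monotone_const, fun _ => ha⟩⟩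

lemma sum_exc_le_varPlus {f : ℕ → ℝ} (hf : Monotone f) (hfS : ∀ i, f i ∈ S) (n : ℕ) :
    ∑ i ∈ Finset.range n, exc (F (f i)) (F (f (i + 1))) ≤ varPlus F S :=
  le_iSup (fun p : {p : ℕ × (ℕ → ℝ) // Monotone p.2 ∧ ∀ i, p.2 i ∈ S} =>
      ∑ i ∈ Finset.range p.1.1, exc (F (p.1.2 i)) (F (p.1.2 (i + 1))))
    ⟨(n, f), hf, hfS⟩

lemma varPlus_le {c : ℝ≥0∞}
    (h : ∀ f : ℕ → ℝ, Monotone f → (∀ i, f i ∈ S) →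
      ∀ n, ∑ i ∈ Finset.range n, exc (F (f i)) (F (f (i + 1))) ≤ c) :
    varPlus F S ≤ c :=
  iSup_le fun p => h p.1.2 p.2.1 p.2.2 p.1.1

lemma varPlus_mono (h : S ⊆ T) : varPlus F S ≤ varPlus F T :=
  varPlus_le fun _ hf hfS => sum_exc_le_varPlus hf fun i => h (hfS i)

lemma exc_le_varPlus {a b : ℝ} (ha : a ∈ S) (hb : b ∈ S) (hab : a ≤ b) :
    exc (F a) (F b) ≤ varPlus F S := by
  have hf : Monotone fun i : ℕ => if i = 0 then a else b := by
    intro i j hij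
    dsimp only
    split_ifs <;> first | exact le_rfl | exact hab | omega
  simpa using sum_exc_le_varPlus (F := F) hf (fun i => by split_ifs <;> assumption) 1

lemma varPlus_Iic_le_add_Icc {t u : ℝ} (ht : t ∈ T) (htu : t ≤ u) :
    varPlus F (T ∩ Iic u) ≤ varPlus F (T ∩ Iic t) + varPlus F (T ∩ Icc t u) := by
  refine varPlus_le fun f hf hfT n => ?_
  calc ∑ i ∈ Finset.range n, exc (F (f i)) (F (f (i + 1)))
      ≤ ∑ i ∈ Finset.range n, (exc (F (min (f i) t)) (F (min (f (i + 1)) t)) +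
          exc (F (max (f i) t)) (F (max (f (i + 1)) t))) :=
        Finset.sum_le_sum fun i _ => exc_le_exc_min_add_exc_max F (hf i.le_succ) t
    _ ≤ varPlus F (T ∩ Iic t) + varPlus F (T ∩ Icc t u) := by
        rw [Finset.sum_add_distrib]
        refine add_le_add (sum_exc_le_varPlus (fun a b hab => min_le_min_right t (hf hab)) ?_ n)
          (sum_exc_le_varPlus (fun a b hab => max_le_max_right t (hf hab)) ?_ n)
        · exact fun i => ⟨min_rec' (· ∈ T) (hfT i).1 ht, min_le_right (f i) t⟩
        · exact fun i => ⟨max_rec' (· ∈ T) (hfT i).1 ht, le_max_right _ _, max_le (hfT i).2 htu⟩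

lemma sum_exc_add_sum_exc_le_varPlus {g f : ℕ → ℝ} (hg : Monotone g) (hf : Monotone f)
    (hgS : ∀ i, g i ∈ S) (hfS : ∀ i, f i ∈ S) {m : ℕ} (hgf : g m ≤ f 0) (n : ℕ) :
    ∑ i ∈ Finset.range m, exc (F (g i)) (F (g (i + 1))) +
      ∑ i ∈ Finset.range n, exc (F (f i)) (F (f (i + 1))) ≤ varPlus F S := by
  set h : ℕ → ℝ := fun i => if i ≤ m then g i else f (i - (m + 1)) with h_def
  have hh : Monotone h := by
    intro i j hij
    simp only [h_def]
    split_ifs with hi hj hj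
    · exact hg hij
    · exact (hg hi).trans (hgf.trans (hf (Nat.zero_le _)))
    · omega
    · exact hf (by omega)
  have hhS : ∀ i, h i ∈ S := fun i => by
    simp only [h_def]
    split_ifs
    exacts [hgS i, hfS _]
  calc _ ≤ ∑ i ∈ Finset.range m, exc (F (g i)) (F (g (i + 1))) + exc (F (g m)) (F (f 0)) +
        ∑ i ∈ Finset.range n, exc (F (f i)) (F (f (i + 1))) := by gcongr; exact le_self_add
    _ = ∑ i ∈ Finset.range (m + 1 + n), exc (F (h i)) (F (h (i + 1))) := by
        rw [Finset.sum_range_add, Finset.sum_range_succ]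
        congr 2
        · refine Finset.sum_congr rfl fun i hi => ?_
          have := Finset.mem_range.1 hi
          simp only [h_def, if_pos this.le, if_pos (Nat.succ_le_of_lt this)]
        · simp [h_def]
        · funext i
          simp only [h_def, if_neg (by omega : ¬ m + 1 + i ≤ m),
            if_neg (by omega : ¬ m + 1 + i + 1 ≤ m)]
          rw [show m + 1 + i - (m + 1) = i by omega, show m + 1 + i + 1 - (m + 1) = i + 1 by omega]
    _ ≤ varPlus F S := sum_exc_le_varPlus hh hhS _

lemma varPlus_Iic_add_Icc_le {a b : ℝ} (ha : a ∈ T) (hab : a ≤ b) :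
    varPlus F (T ∩ Iic a) + varPlus F (T ∩ Icc a b) ≤ varPlus F (T ∩ Iic b) := by
  have := nonempty_partition (S := T ∩ Iic a) ⟨ha, le_refl a⟩
  have := nonempty_partition (S := T ∩ Icc a b) ⟨ha, le_refl a, hab⟩
  refine ENNReal.iSup_add_iSup_le ?_
  rintro ⟨⟨m, g⟩, hg, hgS⟩ ⟨⟨n, f⟩, hf, hfS⟩
  exact sum_exc_add_sum_exc_le_varPlus (S := T ∩ Iic b) hg hf
    (fun i => ⟨(hgS i).1, (hgS i).2.trans hab⟩) (fun i => ⟨(hfS i).1, (hfS i).2.2⟩)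
    ((hgS m).2.trans (hfS 0).2.1) n

lemma varPlus_Icc_le_iSup_add_Ioc {t u : ℝ} :
    varPlus F (T ∩ Icc t u) ≤
      (⨆ s ∈ T ∩ Ioc t u, exc (F t) (F s)) + varPlus F (T ∩ Ioc t u) := by
  refine varPlus_le fun f hf hfT n => ?_
  induction n generalizing f with
  | zero => simp
  | succ n ih =>
    rcases (hfT 0).2.1.lt_or_eq with ht0 | ht0
    · exact le_add_left (sum_exc_le_varPlus (S := T ∩ Ioc t u) hf
        (fun i => ⟨(hfT i).1, ht0.trans_le (hf i.zero_le), (hfT i).2.2⟩) _)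
    have hf' : Monotone fun i => f (i + 1) := fun a b hab => hf (by omega)
    rw [Finset.sum_range_succ', zero_add, ← ht0]
    rcases (hfT 1).2.1.lt_or_eq with ht1 | ht1
    · rw [add_comm]
      gcongr
      · exact le_iSup₂ (f := fun s (_ : s ∈ T ∩ Ioc t u) => exc (F t) (F s)) (f 1)
          ⟨(hfT 1).1, ht1, (hfT 1).2.2⟩
      · exact sum_exc_le_varPlus (S := T ∩ Ioc t u) hf' (fun i => ⟨(hfT _).1,
          ht1.trans_le (hf (Nat.le_add_left 1 i)), (hfT _).2.2⟩) n
    · rw [← ht1, exc_self, add_zero]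
      exact ih _ hf' fun i => hfT _

end Variation

lemma Monotone.limsup_nhdsWithin_le {α β : Type*} [LinearOrder α] [TopologicalSpace α]
    [OrderTopology α] [CompleteLattice β] {v : α → β} (hv : Monotone v) (S : Set α) {t s : α}
    (hts : t < s) : limsup v (𝓝[S] t) ≤ v s :=
  limsup_le_of_le (by isBoundedDefault) (eventually_nhdsWithin_of_eventually_nhds
    ((eventually_lt_nhds hts).mono fun _ hx => hv hx.le))

lemma nhdsWithin_inter_Ioi_neBot {T : Set ℝ} {t : ℝ}
    (h : ∀ ε > 0, (T ∩ Ioo t (t + ε)).Nonempty) : (𝓝[T ∩ Ioi t] t).NeBot := by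
  rw [← mem_closure_iff_nhdsWithin_neBot, Metric.mem_closure_iff]
  intro ε hε
  obtain ⟨s, hsT, hts, hst⟩ := h ε hε
  exact ⟨s, ⟨hsT, hts⟩, by rw [Real.dist_eq, abs_sub_lt_iff]; constructor <;> linarith⟩

lemma eventually_forall_Ioc_of_eventually {S : Set ℝ} {t : ℝ} {p : ℝ → Prop}
    (h : ∀ᶠ s in 𝓝[S] t, p s) : ∀ᶠ u in 𝓝[S] t, ∀ s ∈ S ∩ Ioc t u, p s := by
  obtain ⟨ε, hε, hsub⟩ := Metric.mem_nhdsWithin_iff.1 h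
  filter_upwards [mem_nhdsWithin_of_mem_nhds (ball_mem_nhds t hε)] with u hu s ⟨hsS, hts, hsu⟩
  refine hsub ⟨?_, hsS⟩
  rw [Metric.mem_ball, Real.dist_eq] at hu ⊢
  rw [abs_of_pos (sub_pos.2 hts)]
  linarith [le_abs_self (u - t)]

section JumpFormula

variable {M : Type*} [MetricSpace M] {F : ℝ → Set M} {T : Set ℝ} {t : ℝ}

lemma monotone_varPlus_Iic : Monotone fun s => varPlus F (T ∩ Iic s) :=
  fun _ _ hab => varPlus_mono (inter_subset_inter_right _ (Iic_subset_Iic.2 hab))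

lemma limsup_add_varPlus_Ioc_le {u : ℝ} (hu : u ∈ T) (htu : t < u) :
    limsup (fun s => varPlus F (T ∩ Iic s)) (𝓝[T ∩ Ioi t] t) + varPlus F (T ∩ Ioc t u) ≤
      varPlus F (T ∩ Iic u) := by
  have := nonempty_partition (S := T ∩ Ioc t u) ⟨hu, htu, le_rfl⟩
  refine (ENNReal.add_iSup _).trans_le (iSup_le ?_)
  rintro ⟨⟨n, f⟩, hf, hfS⟩
  calc _ ≤ varPlus F (T ∩ Iic (f 0)) + varPlus F (T ∩ Icc (f 0) u) :=
        add_le_add (monotone_varPlus_Iic.limsup_nhdsWithin_le _ (hfS 0).2.1)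
          (sum_exc_le_varPlus (S := T ∩ Icc (f 0) u) hf
            (fun i => ⟨(hfS i).1, hf i.zero_le, (hfS i).2.2⟩) n)
    _ ≤ varPlus F (T ∩ Iic u) := varPlus_Iic_add_Icc_le (hfS 0).1 (hfS 0).2.2

lemma limsup_varPlus_Iic_le (hV : varPlus F T ≠ ⊤) (ht : t ∈ T) [(𝓝[T ∩ Ioi t] t).NeBot] :
    limsup (fun s => varPlus F (T ∩ Iic s)) (𝓝[T ∩ Ioi t] t) ≤
      varPlus F (T ∩ Iic t) + limsup (fun s => exc (F t) (F s)) (𝓝[T ∩ Ioi t] t) := by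
  set R := limsup (fun s => varPlus F (T ∩ Iic s)) (𝓝[T ∩ Ioi t] t)
  set L := limsup (fun s => exc (F t) (F s)) (𝓝[T ∩ Ioi t] t)
  have hR : R ≠ ⊤ := ne_top_of_le_ne_top hV (limsup_le_of_le (by isBoundedDefault)
    (Eventually.of_forall fun s => varPlus_mono inter_subset_left))
  refine ENNReal.le_of_forall_pos_le_add fun δ hδ hfin => ?_
  have hδ2 : (δ / 2 : ℝ≥0∞) ≠ 0 := by simpa using hδ.ne'
  have hL : L ≠ ⊤ := (ENNReal.add_lt_top.1 hfin).2.ne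
  have he : ∀ᶠ u in 𝓝[T ∩ Ioi t] t, ∀ s ∈ T ∩ Ioi t ∩ Ioc t u, exc (F t) (F s) ≤ L + δ / 2 :=
    eventually_forall_Ioc_of_eventually
      ((eventually_lt_of_limsup_lt (ENNReal.lt_add_right hL hδ2)).mono fun _ h => h.le)
  have hv : ∀ᶠ u in 𝓝[T ∩ Ioi t] t, varPlus F (T ∩ Iic u) ≤ R + δ / 2 :=
    (eventually_lt_of_limsup_lt (ENNReal.lt_add_right hR hδ2)).mono fun _ h => h.le
  obtain ⟨u, heu, hvu, huT, htu⟩ := (he.and (hv.and self_mem_nhdsWithin)).exists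
  have hB : varPlus F (T ∩ Ioc t u) ≤ δ / 2 :=
    (ENNReal.add_le_add_iff_left hR).1 ((limsup_add_varPlus_Ioc_le huT htu).trans hvu)
  calc R ≤ varPlus F (T ∩ Iic u) := monotone_varPlus_Iic.limsup_nhdsWithin_le _ htu
    _ ≤ varPlus F (T ∩ Iic t) +
          ((⨆ s ∈ T ∩ Ioc t u, exc (F t) (F s)) + varPlus F (T ∩ Ioc t u)) :=
        (varPlus_Iic_le_add_Icc ht htu.le).trans (add_le_add_right varPlus_Icc_le_iSup_add_Ioc _)
    _ ≤ varPlus F (T ∩ Iic t) + (L + δ / 2 + δ / 2) :=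
        add_le_add_right (add_le_add (iSup₂_le fun s hs => heu s ⟨⟨hs.1, hs.2.1⟩, hs.2⟩) hB) _
    _ = varPlus F (T ∩ Iic t) + L + δ := by rw [add_assoc L, ENNReal.add_halves, add_assoc]

lemma varPlus_Iic_add_exc_le {s : ℝ} (ht : t ∈ T) (hs : s ∈ T) (hts : t ≤ s) :
    varPlus F (T ∩ Iic t) + exc (F t) (F s) ≤ varPlus F (T ∩ Iic s) :=
  (add_le_add_right
      (exc_le_varPlus (S := T ∩ Icc t s) ⟨ht, le_rfl, hts⟩ ⟨hs, hts, le_rfl⟩ hts) _).trans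
    (varPlus_Iic_add_Icc_le ht hts)

lemma varPlus_Iic_add_limsup_le (ht : t ∈ T) [(𝓝[T ∩ Ioi t] t).NeBot] :
    varPlus F (T ∩ Iic t) + limsup (fun s => exc (F t) (F s)) (𝓝[T ∩ Ioi t] t) ≤
      limsup (fun s => varPlus F (T ∩ Iic s)) (𝓝[T ∩ Ioi t] t) := by
  rw [← limsup_const_add _ _ _ (by isBoundedDefault) (by isBoundedDefault)]
  exact limsup_le_limsup
    (eventually_mem_nhdsWithin.mono fun s hs => varPlus_Iic_add_exc_le ht hs.1 hs.2.le)

end JumpFormula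

theorem varPlus_right_jump_general {M : Type*} [MetricSpace M]
    (T : Set ℝ) (F : ℝ → Set M)
    (hV : varPlus F T < ⊤) (t : ℝ) (ht : t ∈ T)
    (hright : ∀ ε > 0, (T ∩ Set.Ioo t (t + ε)).Nonempty) :
    Filter.limsup (fun s => varPlus F (T ∩ Set.Iic s)) (nhdsWithin t (T ∩ Set.Ioi t)) =
      varPlus F (T ∩ Set.Iic t) +
      Filter.limsup (fun s => exc (F t) (F s)) (nhdsWithin t (T ∩ Set.Ioi t)) := by
  have := nhdsWithin_inter_Ioi_neBot hright
  exact le_antisymm (limsup_varPlus_Iic_le hV.ne ht) (varPlus_Iic_add_limsup_le ht)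

/-- Right jump formula: v⁺(t+0) = v⁺(t) + limsup_{T ∋ s → t+0} e(F(t),F(s)). -/
theorem varPlus_right_jump {M : Type*} [MetricSpace M]
    (T : Set ℝ) (F : ℝ → Set M)
    (hF : ∀ t ∈ T, (F t).Nonempty ∧ IsCompact (F t))
    (hV : varPlus F T < ⊤) (t : ℝ) (ht : t ∈ T)
    (hright : ∀ ε > 0, (T ∩ Set.Ioo t (t + ε)).Nonempty) :
    Filter.limsup (fun s => varPlus F (T ∩ Set.Iic s)) (nhdsWithin t (T ∩ Set.Ioi t)) =
      varPlus F (T ∩ Set.Iic t) +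
      Filter.limsup (fun s => exc (F t) (F s)) (nhdsWithin t (T ∩ Set.Ioi t)) :=
  varPlus_right_jump_general T F hV t ht hright
end

section
/- Let T ⊆ ℝ, t₀ ∈ T, X₀ ∈ c(M), and F : T → c(M) with V(F,T) < +∞ (Jordan variation w.r.t. the Hausdorff metric). Then there exists a set-valued selector Γ : T → c(M) of F on T such that d_H(X₀, Γ(t₀)) ≤ e(X₀, F(t₀)) and V(Γ,T) ≤ V⁺(F, T∩[t₀,+∞)) + V⁻(F, T∩(-∞,t₀]) ≤ V(F,T). -/
open Set Metric EMetric Filter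
open scoped ENNReal Pointwise

/-! A compact-valued selector is assembled from single-valued selections. Put
w(s,t) = V⁺(F, T ∩ [t₀,∞) ∩ [s,t]) + V⁻(F, T ∩ (-∞,t₀] ∩ [s,t]); it is superadditive and
dominates e(F s, F t) right of t₀ and e(F t, F s) left of t₀. On a finite set, a selection y
with y(t₀) = b and d(y s, y t) ≤ w(s,t) is built greedily: a new point t to the right of all
previous ones gets a value in F(t) nearest to the value at its predecessor (left of t₀, reverse
the order); Tychonoff's theorem and the finite intersection property extend this to all of T.
Then Γ(t) is the set of values at t of such selections with
y(t₀) ∈ B = {y ∈ F(t₀) : d(y, X₀) ≤ e(X₀, F(t₀))}: a continuous image of a compact set of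
selections, with Γ(t₀) = B and d_H(Γ s, Γ t) ≤ w(s,t) because the bound holds along each
selection. -/

section Excess

variable {M : Type*} [MetricSpace M] {X Y : Set M}

lemma infEDist_le_exc {x : M} (hx : x ∈ X) : infEDist x Y ≤ exc X Y :=
  le_iSup₂ (f := fun x _ => infEDist x Y) x hx

lemma exc_le_hausdorffEDist : exc X Y ≤ hausdorffEDist X Y :=
  iSup₂_le fun _ hx => infEDist_le_hausdorffEDist_of_mem hx

lemma exc_le_hausdorffEDist_swap : exc Y X ≤ hausdorffEDist X Y := by
  rw [hausdorffEDist_comm]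
  exact exc_le_hausdorffEDist

lemma exists_edist_le_exc (hY : IsCompact Y) (hYne : Y.Nonempty) {x : M} (hx : x ∈ X) :
    ∃ y ∈ Y, edist x y ≤ exc X Y := by
  obtain ⟨y, hy, hxy⟩ := hY.exists_infEDist_eq_edist hYne x
  exact ⟨y, hy, hxy ▸ infEDist_le_exc hx⟩

lemma exists_mem_sep_edist_le_exc (hY : IsCompact Y) (hYne : Y.Nonempty) {x : M} (hx : x ∈ X) :
    ∃ y ∈ {y ∈ Y | infEDist y X ≤ exc X Y}, edist x y ≤ exc X Y := by
  obtain ⟨y, hy, hxy⟩ := exists_edist_le_exc hY hYne hx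
  exact ⟨y, ⟨hy, (infEDist_le_edist_of_mem hx).trans (edist_comm x y ▸ hxy)⟩, hxy⟩

lemma hausdorffEDist_sep_le_exc (hY : IsCompact Y) (hYne : Y.Nonempty) :
    hausdorffEDist X {y ∈ Y | infEDist y X ≤ exc X Y} ≤ exc X Y := by
  refine hausdorffEDist_le_of_infEDist (fun x hx => ?_) fun y hy => hy.2
  obtain ⟨y, hy, hxy⟩ := exists_mem_sep_edist_le_exc hY hYne hx
  exact (infEDist_le_edist_of_mem hy).trans hxy

end Excess

section Variation

variable {M : Type*} [MetricSpace M] {D D₁ D₂ : Set M → Set M → ℝ≥0∞} {F : ℝ → Set M}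
  {S S₁ S₂ : Set ℝ}

lemma varBy_mono (h : S₁ ⊆ S₂) : varBy D F S₁ ≤ varBy D F S₂ :=
  iSup_le fun p => le_iSup_of_le ⟨p.1, p.2.1, fun i => h (p.2.2 i)⟩ le_rfl

lemma le_varBy {a b : ℝ} (ha : a ∈ S) (hb : b ∈ S) (hab : a ≤ b) :
    D (F a) (F b) ≤ varBy D F S := by
  have hm : Monotone fun i : ℕ => if i = 0 then a else b := by
    intro i j hij
    by_cases hi : i = 0 <;> by_cases hj : j = 0 <;> simp [hi, hj, hab]; omega
  refine le_trans ?_ (le_iSup _ ⟨(1, fun i => if i = 0 then a else b), hm, fun i => by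
    dsimp only; split <;> assumption⟩)
  simp

lemma varBy_le_varBy (h : ∀ a ∈ S, ∀ b ∈ S, a ≤ b → D₁ (F a) (F b) ≤ D₂ (F a) (F b)) :
    varBy D₁ F S ≤ varBy D₂ F S :=
  iSup_le fun p => le_iSup_of_le p <| Finset.sum_le_sum fun i _ =>
    h _ (p.2.2 i) _ (p.2.2 (i + 1)) (p.2.1 i.le_succ)

lemma varBy_add_varBy_le (h₁ : S₁ ⊆ S) (h₂ : S₂ ⊆ S) (hle : ∀ x ∈ S₁, ∀ y ∈ S₂, x ≤ y) :
    varBy D F S₁ + varBy D F S₂ ≤ varBy D F S := by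
  rcases isEmpty_or_nonempty {p : ℕ × (ℕ → ℝ) // Monotone p.2 ∧ ∀ i, p.2 i ∈ S₁} with hS₁ | hS₁
  · rw [varBy.eq_1 D F S₁, iSup_of_empty, ENNReal.bot_eq_zero, zero_add]
    exact varBy_mono h₂
  rcases isEmpty_or_nonempty {p : ℕ × (ℕ → ℝ) // Monotone p.2 ∧ ∀ i, p.2 i ∈ S₂} with hS₂ | hS₂
  · rw [varBy.eq_1 D F S₂, iSup_of_empty, ENNReal.bot_eq_zero, add_zero]
    exact varBy_mono h₁
  refine ENNReal.iSup_add_iSup_le fun ⟨⟨n, u⟩, hu, huS⟩ ⟨⟨m, v⟩, hv, hvS⟩ => ?_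
  -- concatenate the two partitions; the joining term is simply dropped
  let w : ℕ → ℝ := fun i => if i ≤ n then u i else v (i - (n + 1))
  have hw : Monotone w := by
    intro i j hij
    simp only [w]
    split_ifs with hi hj hj
    · exact hu hij
    · exact hle _ (huS i) _ (hvS _)
    · omega
    · exact hv (by omega)
  have hwS : ∀ i, w i ∈ S := fun i => by
    simp only [w]; split
    · exact h₁ (huS i)
    · exact h₂ (hvS _)
  refine le_trans ?_ (le_iSup _ ⟨(n + (1 + m), w), hw, hwS⟩)
  show _ ≤ ∑ i ∈ Finset.range (n + (1 + m)), D (F (w i)) (F (w (i + 1)))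
  rw [Finset.sum_range_add, Finset.sum_range_add]
  refine add_le_add (le_of_eq (Finset.sum_congr rfl fun i hi => ?_))
    (le_add_left (le_of_eq (Finset.sum_congr rfl fun i _ => ?_)))
  · have : i < n := Finset.mem_range.1 hi
    simp only [w, if_pos this.le, if_pos (Nat.succ_le_of_lt this)]
  · simp only [w, if_neg (by omega : ¬ n + (1 + i) ≤ n), if_neg (by omega : ¬ n + (1 + i) + 1 ≤ n)]
    congr 3 <;> omega

lemma varBy_inter_Icc_add_le {a b c : ℝ} (hab : a ≤ b) (hbc : b ≤ c) :
    varBy D F (S ∩ Icc a b) + varBy D F (S ∩ Icc b c) ≤ varBy D F (S ∩ Icc a c) :=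
  varBy_add_varBy_le (fun _ hx => ⟨hx.1, hx.2.1, hx.2.2.trans hbc⟩)
    (fun _ hx => ⟨hx.1, hab.trans hx.2.1, hx.2.2⟩) fun _ hx _ hy => hx.2.2.trans hy.2.1

lemma sum_varBy_inter_Icc_le {u : ℕ → ℝ} (hu : Monotone u) (n : ℕ) :
    ∑ i ∈ Finset.range n, varBy D F (S ∩ Icc (u i) (u (i + 1))) ≤ varBy D F S := by
  suffices ∑ i ∈ Finset.range n, varBy D F (S ∩ Icc (u i) (u (i + 1)))
      ≤ varBy D F (S ∩ Icc (u 0) (u n)) from this.trans (varBy_mono inter_subset_left)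
  induction n with
  | zero => simp
  | succ n ih =>
    rw [Finset.sum_range_succ]
    exact (add_le_add_left ih _).trans (varBy_inter_Icc_add_le (hu n.zero_le) (hu n.le_succ))

lemma varBy_le_add_of_le {G : ℝ → Set M} {T : Set ℝ}
    (h : ∀ a ∈ T, ∀ b ∈ T, a ≤ b →
      D (G a) (G b) ≤ varBy D₁ F (S₁ ∩ Icc a b) + varBy D₂ F (S₂ ∩ Icc a b)) :
    varBy D G T ≤ varBy D₁ F S₁ + varBy D₂ F S₂ := by
  refine iSup_le fun ⟨⟨n, u⟩, hu, huT⟩ => ?_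
  calc ∑ i ∈ Finset.range n, D (G (u i)) (G (u (i + 1)))
      ≤ ∑ i ∈ Finset.range n, (varBy D₁ F (S₁ ∩ Icc (u i) (u (i + 1))) +
          varBy D₂ F (S₂ ∩ Icc (u i) (u (i + 1)))) :=
        Finset.sum_le_sum fun i _ => h _ (huT i) _ (huT (i + 1)) (hu i.le_succ)
    _ ≤ varBy D₁ F S₁ + varBy D₂ F S₂ := by
        rw [Finset.sum_add_distrib]
        exact add_le_add (sum_varBy_inter_Icc_le hu n) (sum_varBy_inter_Icc_le hu n)

noncomputable def varSplit (F : ℝ → Set M) (T : Set ℝ) (c s t : ℝ) : ℝ≥0∞ :=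
  varPlus F (T ∩ Ici c ∩ Icc s t) + varMinus F (T ∩ Iic c ∩ Icc s t)

lemma exc_le_varSplit_of_le {T : Set ℝ} {c s t : ℝ} (hs : s ∈ T) (ht : t ∈ T) (hcs : c ≤ s)
    (hst : s ≤ t) : exc (F s) (F t) ≤ varSplit F T c s t :=
  (le_varBy (D := exc) (S := T ∩ Ici c ∩ Icc s t) ⟨⟨hs, hcs⟩, le_rfl, hst⟩
    ⟨⟨ht, hcs.trans hst⟩, hst, le_rfl⟩ hst).trans le_self_add

lemma exc_le_varSplit_of_ge {T : Set ℝ} {c s t : ℝ} (hs : s ∈ T) (ht : t ∈ T) (hst : s ≤ t)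
    (htc : t ≤ c) : exc (F t) (F s) ≤ varSplit F T c s t :=
  (le_varBy (D := fun X Y => exc Y X) (S := T ∩ Iic c ∩ Icc s t)
    ⟨⟨hs, hst.trans htc⟩, le_rfl, hst⟩ ⟨⟨ht, htc⟩, hst, le_rfl⟩ hst).trans le_add_self

lemma varSplit_add_le {T : Set ℝ} {c r s t : ℝ} (hrs : r ≤ s) (hst : s ≤ t) :
    varSplit F T c r s + varSplit F T c s t ≤ varSplit F T c r t :=
  (add_add_add_comm _ _ _ _).trans_le
    (add_le_add (varBy_inter_Icc_add_le hrs hst) (varBy_inter_Icc_add_le hrs hst))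

lemma varPlus_add_varMinus_le_varH (F : ℝ → Set M) (T : Set ℝ) (c : ℝ) :
    varPlus F (T ∩ Ici c) + varMinus F (T ∩ Iic c) ≤ varH F T := by
  rw [add_comm]
  calc varMinus F (T ∩ Iic c) + varPlus F (T ∩ Ici c)
      ≤ varH F (T ∩ Iic c) + varH F (T ∩ Ici c) :=
        add_le_add (varBy_le_varBy fun _ _ _ _ _ => exc_le_hausdorffEDist_swap)
          (varBy_le_varBy fun _ _ _ _ _ => exc_le_hausdorffEDist)
    _ ≤ varH F T := varBy_add_varBy_le inter_subset_left inter_subset_left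
        fun _ hx _ hy => hx.2.trans hy.2

end Variation

section Selection

variable {ι M : Type*} [LinearOrder ι] [MetricSpace M] {F : ι → Set M} {v : ι → ι → ℝ≥0∞}
  {a : ι} {b : M}

lemma exists_mem_edist_le_of_forall_lt
    (hexc : ∀ i j, a ≤ i → i ≤ j → exc (F i) (F j) ≤ v i j)
    (hv : ∀ i j k, a ≤ i → i ≤ j → j ≤ k → v i j + v j k ≤ v i k)
    {s : Finset ι} (has : a ∈ s) {y : ι → M} (hyF : ∀ i, y i ∈ F i)
    (hy : ∀ i ∈ s, ∀ j ∈ s, a ≤ i → i ≤ j → edist (y i) (y j) ≤ v i j)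
    {p : ι} (hp : ∀ i ∈ s, i < p) (hFp : IsCompact (F p)) (hFp' : (F p).Nonempty) :
    ∃ z ∈ F p, ∀ i ∈ s, a ≤ i → edist (y i) z ≤ v i p := by
  -- attach the new point to the largest old one, and use the triangle inequality for the rest
  set m := s.max' ⟨a, has⟩
  have ham : a ≤ m := s.le_max' a has
  have hmp : m < p := hp m (s.max'_mem _)
  obtain ⟨z, hz, hmz⟩ := exists_edist_le_exc hFp hFp' (hyF m)
  refine ⟨z, hz, fun i hi hai => ?_⟩
  have him : i ≤ m := s.le_max' i hi
  calc edist (y i) z ≤ edist (y i) (y m) + edist (y m) z := edist_triangle _ _ _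
    _ ≤ v i m + v m p :=
        add_le_add (hy i hi m (s.max'_mem _) hai him) (hmz.trans (hexc m p ham hmp.le))
    _ ≤ v i p := hv i m p hai him hmp.le

lemma exists_selection_edist_le_finset (hF : ∀ i, (F i).Nonempty ∧ IsCompact (F i))
    (hexc : ∀ i j, a ≤ i → i ≤ j → exc (F i) (F j) ≤ v i j)
    (hv : ∀ i j k, a ≤ i → i ≤ j → j ≤ k → v i j + v j k ≤ v i k)
    (hb : b ∈ F a) (s : Finset ι) :
    ∃ y : ι → M, (∀ i, y i ∈ F i) ∧ y a = b ∧
      ∀ i ∈ insert a s, ∀ j ∈ insert a s, a ≤ i → i ≤ j → edist (y i) (y j) ≤ v i j := by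
  induction s using Finset.induction_on_max with
  | empty =>
    refine ⟨Function.update (fun i => (hF i).1.some) a b, fun i => ?_, by simp, ?_⟩
    · rcases eq_or_ne i a with rfl | h
      · simpa using hb
      · simpa [h] using (hF i).1.some_mem
    · simp
  | insert p s hps ih =>
    obtain ⟨y, hyF, hya, hy⟩ := ih
    rcases le_or_gt p a with hpa | hap
    · have hmem : ∀ i ∈ insert a (insert p s), a ≤ i → i ∈ insert a s := by
        intro i hi hai
        rcases Finset.mem_insert.1 hi with rfl | hi
        · exact Finset.mem_insert_self _ _
        rcases Finset.mem_insert.1 hi with rfl | hi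
        · rw [le_antisymm hpa hai]; exact Finset.mem_insert_self _ _
        · exact Finset.mem_insert_of_mem hi
      exact ⟨y, hyF, hya, fun i hi j hj hai hij =>
        hy i (hmem i hi hai) j (hmem j hj (hai.trans hij)) hai hij⟩
    have hlt : ∀ i ∈ insert a s, i < p := by
      simpa [Finset.forall_mem_insert] using ⟨hap, hps⟩
    obtain ⟨z, hz, hyz⟩ := exists_mem_edist_le_of_forall_lt hexc hv (Finset.mem_insert_self a s)
      hyF hy hlt (hF p).2 (hF p).1
    refine ⟨Function.update y p z, fun i => ?_, by simp [hap.ne, hya], ?_⟩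
    · rcases eq_or_ne i p with rfl | h
      · simpa using hz
      · simpa [h] using hyF i
    rw [Finset.insert_comm]
    intro i hi j hj hai hij
    rw [Finset.mem_insert] at hi hj
    rcases hi with rfl | hi <;> rcases hj with rfl | hj
    · simp
    · exact absurd hij (hlt j hj).not_ge
    · simpa [(hlt i hi).ne] using hyz i hi hai
    · simpa [(hlt i hi).ne, (hlt j hj).ne] using hy i hi j hj hai hij

lemma exists_selection_edist_le (hF : ∀ i, (F i).Nonempty ∧ IsCompact (F i))
    (hexc : ∀ i j, a ≤ i → i ≤ j → exc (F i) (F j) ≤ v i j)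
    (hv : ∀ i j k, a ≤ i → i ≤ j → j ≤ k → v i j + v j k ≤ v i k) (hb : b ∈ F a) :
    ∃ y : ι → M, (∀ i, y i ∈ F i) ∧ y a = b ∧
      ∀ i j, a ≤ i → i ≤ j → edist (y i) (y j) ≤ v i j := by
  let C : {q : ι × ι // a ≤ q.1 ∧ q.1 ≤ q.2} → Set (ι → M) :=
    fun q => {y | edist (y q.1.1) (y q.1.2) ≤ v q.1.1 q.1.2}
  have hK : IsCompact (pi univ F ∩ {y | y a = b}) :=
    (isCompact_univ_pi fun i => (hF i).2).inter_right (isClosed_eq (continuous_apply a)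
      continuous_const)
  obtain ⟨y, ⟨hyF, hya⟩, hy⟩ := hK.inter_iInter_nonempty C
    (fun q => isClosed_le (by fun_prop) continuous_const) fun u => by
      obtain ⟨y, hyF, hya, hy⟩ := exists_selection_edist_le_finset hF hexc hv hb
        (u.image (·.1.1) ∪ u.image (·.1.2))
      refine ⟨y, ⟨mem_univ_pi.2 hyF, hya⟩, mem_iInter₂.2 fun q hq => ?_⟩
      exact hy _ (by simp [Finset.mem_image_of_mem _ hq]) _
        (by simp [Finset.mem_image_of_mem _ hq]) q.2.1 q.2.2
  exact ⟨y, mem_univ_pi.1 hyF, hya, fun i j hai hij => mem_iInter.1 hy ⟨(i, j), hai, hij⟩⟩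

lemma exists_selection_edist_le_two_sided (hF : ∀ i, (F i).Nonempty ∧ IsCompact (F i))
    (hexc_ge : ∀ i j, a ≤ i → i ≤ j → exc (F i) (F j) ≤ v i j)
    (hexc_le : ∀ i j, i ≤ j → j ≤ a → exc (F j) (F i) ≤ v i j)
    (hv : ∀ i j k, i ≤ j → j ≤ k → v i j + v j k ≤ v i k) (hb : b ∈ F a) :
    ∃ y : ι → M, (∀ i, y i ∈ F i) ∧ y a = b ∧ ∀ i j, i ≤ j → edist (y i) (y j) ≤ v i j := by
  obtain ⟨yr, hyFr, hyar, hyr⟩ :=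
    exists_selection_edist_le hF hexc_ge (fun i j k _ => hv i j k) hb
  -- the selection to the left of `a` is a selection to the right of `a` for the reversed order
  obtain ⟨yl, hyFl, hyal, hyl⟩ := exists_selection_edist_le (ι := ιᵒᵈ)
    (F := fun i => F (OrderDual.ofDual i))
    (v := fun i j => v (OrderDual.ofDual j) (OrderDual.ofDual i)) (a := OrderDual.toDual a)
    (fun i => hF _) (fun i j hai hij => hexc_le _ _ hij hai)
    (fun i j k _ hij hjk => add_comm (v _ _) (v _ _) ▸ hv _ _ _ hjk hij) hb
  let y : ι → M := fun i => if a ≤ i then yr i else yl (OrderDual.toDual i)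
  have hy_ge : ∀ i, a ≤ i → y i = yr i := fun i h => if_pos h
  have hy_le : ∀ i, i ≤ a → y i = yl (OrderDual.toDual i) := by
    intro i h
    rcases h.eq_or_lt with rfl | h
    · simp [y, hyar, hyal]
    · exact if_neg h.not_ge
  have hy_ge_a : ∀ j, a ≤ j → edist (y a) (y j) ≤ v a j := fun j h => by
    simpa [hy_ge a le_rfl, hy_ge j h] using hyr a j le_rfl h
  have hy_le_a : ∀ i, i ≤ a → edist (y i) (y a) ≤ v i a := fun i h => by
    simpa [hy_le a le_rfl, hy_le i h, edist_comm] using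
      hyl (OrderDual.toDual a) (OrderDual.toDual i) le_rfl h
  refine ⟨y, fun i => ?_, hy_ge a le_rfl ▸ hyar, fun i j hij => ?_⟩
  · by_cases h : a ≤ i
    · exact hy_ge i h ▸ hyFr i
    · exact hy_le i (le_of_not_ge h) ▸ hyFl (OrderDual.toDual i)
  rcases le_total a i with hai | hia
  · simpa [hy_ge i hai, hy_ge j (hai.trans hij)] using hyr i j hai hij
  rcases le_total j a with hja | haj
  · simpa [hy_le i hia, hy_le j hja, edist_comm] using
      hyl (OrderDual.toDual j) (OrderDual.toDual i) hja hij
  calc edist (y i) (y j) ≤ edist (y i) (y a) + edist (y a) (y j) := edist_triangle _ _ _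
    _ ≤ v i a + v a j := add_le_add (hy_le_a i hia) (hy_ge_a j haj)
    _ ≤ v i j := hv i a j hia haj

theorem exists_selector_hausdorffEDist_le (hF : ∀ i, (F i).Nonempty ∧ IsCompact (F i))
    (hexc_ge : ∀ i j, a ≤ i → i ≤ j → exc (F i) (F j) ≤ v i j)
    (hexc_le : ∀ i j, i ≤ j → j ≤ a → exc (F j) (F i) ≤ v i j)
    (hv : ∀ i j k, i ≤ j → j ≤ k → v i j + v j k ≤ v i k)
    {B : Set M} (hB : IsClosed B) (hBne : B.Nonempty) (hBF : B ⊆ F a) :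
    ∃ Γ : ι → Set M, (∀ i, (Γ i).Nonempty ∧ IsCompact (Γ i) ∧ Γ i ⊆ F i) ∧ Γ a = B ∧
      ∀ i j, i ≤ j → hausdorffEDist (Γ i) (Γ j) ≤ v i j := by
  let W : Set (ι → M) :=
    {y | (∀ i, y i ∈ F i) ∧ y a ∈ B ∧ ∀ i j, i ≤ j → edist (y i) (y j) ≤ v i j}
  have hW : IsCompact W := by
    refine (isCompact_univ_pi fun i => (hF i).2).of_isClosed_subset ?_ fun y hy =>
      mem_univ_pi.2 hy.1
    simp only [W, ofPred_and, ofPred_forall]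
    exact (isClosed_iInter fun i => (hF i).2.isClosed.preimage (continuous_apply i)).inter
      ((hB.preimage (continuous_apply a)).inter (isClosed_iInter fun i => isClosed_iInter
        fun j => isClosed_iInter fun _ =>
          isClosed_le ((continuous_apply i).edist (continuous_apply j)) continuous_const))
  have hWB : ∀ b ∈ B, ∃ y ∈ W, y a = b := fun b hb => by
    obtain ⟨y, hyF, hya, hy⟩ :=
      exists_selection_edist_le_two_sided hF hexc_ge hexc_le hv (hBF hb)
    exact ⟨y, ⟨hyF, hya ▸ hb, hy⟩, hya⟩
  refine ⟨fun i => (fun y => y i) '' W, fun i => ⟨?_, hW.image (continuous_apply i), ?_⟩, ?_, ?_⟩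
  · obtain ⟨y, hy, -⟩ := hWB _ hBne.some_mem
    exact ⟨y i, y, hy, rfl⟩
  · rintro _ ⟨y, hy, rfl⟩
    exact hy.1 i
  · refine subset_antisymm ?_ fun b hb => hWB b hb
    rintro _ ⟨y, hy, rfl⟩
    exact hy.2.1
  · intro i j hij
    refine hausdorffEDist_le_of_mem_edist ?_ ?_
    · rintro _ ⟨y, hy, rfl⟩
      exact ⟨y j, ⟨y, hy, rfl⟩, hy.2.2 i j hij⟩
    · rintro _ ⟨y, hy, rfl⟩
      exact ⟨y i, ⟨y, hy, rfl⟩, edist_comm (y j) (y i) ▸ hy.2.2 i j hij⟩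

end Selection

theorem exists_selector_of_bounded_variation_general {M : Type*} [MetricSpace M]
    (T : Set ℝ) (F : ℝ → Set M) (hF : ∀ t ∈ T, (F t).Nonempty ∧ IsCompact (F t))
    (t₀ : ℝ) (ht₀ : t₀ ∈ T) (X₀ : Set M) (hX₀ : X₀.Nonempty) :
    ∃ Γ : ℝ → Set M,
      (∀ t ∈ T, (Γ t).Nonempty ∧ IsCompact (Γ t) ∧ Γ t ⊆ F t) ∧
      EMetric.hausdorffEdist X₀ (Γ t₀) ≤ exc X₀ (F t₀) ∧
      varH Γ T ≤ varPlus F (T ∩ Set.Ici t₀) + varMinus F (T ∩ Set.Iic t₀) ∧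
      varPlus F (T ∩ Set.Ici t₀) + varMinus F (T ∩ Set.Iic t₀) ≤ varH F T := by
  classical
  obtain ⟨hF₀, hF₀c⟩ := hF t₀ ht₀
  obtain ⟨x₀, hx₀⟩ := hX₀
  obtain ⟨Γ, hΓ, hΓ₀, hΓv⟩ := exists_selector_hausdorffEDist_le (ι := T) (F := fun t => F t)
    (v := fun s t => varSplit F T t₀ s t) (a := ⟨t₀, ht₀⟩)
    (B := {y ∈ F t₀ | infEDist y X₀ ≤ exc X₀ (F t₀)}) (fun t => hF t t.2)
    (fun s t hs hst => exc_le_varSplit_of_le s.2 t.2 hs hst)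
    (fun s t hst ht => exc_le_varSplit_of_ge s.2 t.2 hst ht)
    (fun _ _ _ hrs hst => varSplit_add_le hrs hst)
    (hF₀c.isClosed.inter (isClosed_le continuous_infEDist continuous_const))
    ((exists_mem_sep_edist_le_exc hF₀c hF₀ hx₀).imp fun _ h => h.1) (sep_subset _ _)
  refine ⟨fun t => if h : t ∈ T then Γ ⟨t, h⟩ else ∅, fun t ht => by simpa [ht] using hΓ ⟨t, ht⟩,
    ?_, varBy_le_add_of_le fun s hs t ht hst => ?_, varPlus_add_varMinus_le_varH F T t₀⟩
  · simp only [dif_pos ht₀, hΓ₀]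
    exact hausdorffEDist_sep_le_exc hF₀c hF₀
  · simp only [dif_pos hs, dif_pos ht]
    exact hΓv ⟨s, hs⟩ ⟨t, ht⟩ hst

/-- Theorem A (with the refined bound): a multifunction of bounded variation admits a
compact-valued selector Γ with d_H(X₀,Γ(t₀)) ≤ e(X₀,F(t₀)) and
V(Γ,T) ≤ V⁺(F,T∩[t₀,∞)) + V⁻(F,T∩(-∞,t₀]) ≤ V(F,T). -/
theorem exists_selector_of_bounded_variation {M : Type*} [MetricSpace M]
    (T : Set ℝ) (F : ℝ → Set M) (hF : ∀ t ∈ T, (F t).Nonempty ∧ IsCompact (F t))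
    (hV : varH F T < ⊤)
    (t₀ : ℝ) (ht₀ : t₀ ∈ T) (X₀ : Set M) (hX₀ : X₀.Nonempty) (hX₀c : IsCompact X₀) :
    ∃ Γ : ℝ → Set M,
      (∀ t ∈ T, (Γ t).Nonempty ∧ IsCompact (Γ t) ∧ Γ t ⊆ F t) ∧
      EMetric.hausdorffEdist X₀ (Γ t₀) ≤ exc X₀ (F t₀) ∧
      varH Γ T ≤ varPlus F (T ∩ Set.Ici t₀) + varMinus F (T ∩ Set.Iic t₀) ∧
      varPlus F (T ∩ Set.Ici t₀) + varMinus F (T ∩ Set.Iic t₀) ≤ varH F T :=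
  exists_selector_of_bounded_variation_general T F hF t₀ ht₀ X₀ hX₀
end
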